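/- Let U = e₀ = (1,0,0,0) ∈ ℝ⁴ and N = (0, n) ∈ ℝ⁴ with n ∈ ℝ³, |n| = 1 (so that g(U,U) = −1, g(N,N) = 1, g(U,N) = 0 for g = diag(−1,1,1,1)); let θ > 0 and η, ζ̃, σ, χ, μ ∈ ℝ. Then the 5×5 rest-frame matrices of contracted principal coefficients, (B^{aβcδ}U_βU_δ)_{a,c=0..4} and (B^{aβcδ}N_βN_δ)_{a,c=0..4}, equal the block-diagonal matrices diag(−χθ², −σθ I₃, −μ) and diag(χθ², ηθ I₃ + ((1/3)η + ζ̃)θ n nᵀ, μ), respectively, where B^{αβγδ} := U^αU^β(−χθ²U^γU^δ + σθΠ^{γδ}) + Π^{αβ}(−χθ²U^γU^δ + ζ̃θΠ^{γδ}) + χθ²(Π^{αδ}U^β + Π^{βδ}U^α)U^γ − σθ(Π^{αγ}U^β + Π^{βγ}U^α)U^δ + ηθ(Π^{αγ}Π^{βδ} + Π^{αδ}Π^{βγ} − (2/3)Π^{αβ}Π^{γδ}) for α,γ ∈ {0,..,3}, B^{4β4δ} := −μU^βU^δ + μΠ^{βδ}, and B^{αβ4δ} = B^{4βγδ} := 0,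 with Π^{αγ} = g^{αγ} + U^αU^γ. -/

import Mathlib

open scoped BigOperators

/-- The Minkowski metric `diag(-1,1,1,1)` (diagonal entries). -/
noncomputable def gmink : Fin 4 → ℝ := fun i => if i = 0 then -1 else 1

/-- The spatial projector `Π^{αγ} = g^{αγ} + U^α U^γ`. -/
noncomputable def proj (U : Fin 4 → ℝ) : Fin 4 → Fin 4 → ℝ :=
  fun α γ => (if α = γ then gmink α else 0) + U α * U γ

/-- The second-order coefficient tensor `B^{αβγδ}`, α, γ ∈ {0,…,3}. -/
noncomputable def BB (U : Fin 4 → ℝ) (θ η ζt σ χ : ℝ) :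
    Fin 4 → Fin 4 → Fin 4 → Fin 4 → ℝ := fun α β γ δ =>
  U α * U β * (-(χ * θ ^ 2) * U γ * U δ + σ * θ * proj U γ δ)
  + proj U α β * (-(χ * θ ^ 2) * U γ * U δ + ζt * θ * proj U γ δ)
  + χ * θ ^ 2 * (proj U α δ * U β + proj U β δ * U α) * U γ
  - σ * θ * (proj U α γ * U β + proj U β γ * U α) * U δ
  + η * θ * (proj U α γ * proj U β δ + proj U α δ * proj U β γ
      - (2/3) * proj U α β * proj U γ δ)

/-- The coefficient tensor `B^{4β4δ} = −μ U^β U^δ + μ Π^{βδ}`. -/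
noncomputable def BB4 (U : Fin 4 → ℝ) (μ : ℝ) : Fin 4 → Fin 4 → ℝ := fun β δ =>
  -μ * U β * U δ + μ * proj U β δ

/-- The full principal coefficient tensor `B^{aβcδ}`, a, c ∈ {0,…,4},
with `B^{αβ4δ} = B^{4βγδ} = 0`. -/
noncomputable def B5 (U : Fin 4 → ℝ) (θ η ζt σ χ μ : ℝ) :
    Fin 5 → Fin 4 → Fin 5 → Fin 4 → ℝ := fun a β c δ =>
  if ha : (a : ℕ) < 4 then
    if hc : (c : ℕ) < 4 then BB U θ η ζt σ χ ⟨a, ha⟩ β ⟨c, hc⟩ δ else 0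
  else
    if (c : ℕ) < 4 then 0 else BB4 U μ β δ

/-!
Contracting `B^{αβγδ}` with `V_β V_δ` for an arbitrary vector `V` gives, with `u = g(U, V)` and
`q = Π^{βδ} V_β V_δ = g(V, V) + u²`, the covariant expression
`χθ² (q - u²) U^α U^γ + θ (η q - σ u²) Π^{αγ} + (η/3 + ζ̃) θ (Π V)^α (Π V)^γ`,
and `B^{4β4δ} V_β V_δ = μ (q - u²)`. For `V = U` (`u = -1`, `Π U = 0`) and for a unit `V = N`
orthogonal to `U` (`u = 0`, `Π N = N`) these collapse to `-χθ² U U - σθ Π` and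
`χθ² U U + ηθ Π + (η/3 + ζ̃) θ N N`; in the rest frame `U U = diag(1,0,0,0)` and
`Π = diag(0,1,1,1)`, which gives the two block-diagonal matrices.
-/

noncomputable def minkInner (V W : Fin 4 → ℝ) : ℝ := ∑ β, V β * (gmink β * W β)

noncomputable def projApply (U V : Fin 4 → ℝ) (α : Fin 4) : ℝ :=
  ∑ β, proj U α β * (gmink β * V β)

noncomputable def lowerContract (S : Fin 4 → Fin 4 → ℝ) (V : Fin 4 → ℝ) : ℝ :=
  ∑ β, ∑ δ, S β δ * (gmink β * V β) * (gmink δ * V δ)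

lemma gmink_mul_self (β : Fin 4) : gmink β * gmink β = 1 := by
  unfold gmink; split_ifs <;> norm_num

lemma proj_comm (U : Fin 4 → ℝ) (α β : Fin 4) : proj U α β = proj U β α := by
  unfold proj
  by_cases h : α = β
  · subst h; rfl
  · simp only [h, Ne.symm h, if_false]; ring

lemma lowerContract_proj (U V : Fin 4 → ℝ) :
    lowerContract (proj U) V = minkInner V V + minkInner U V ^ 2 := by
  simp [lowerContract, minkInner, proj, gmink, Fin.sum_univ_four]
  ring

lemma projApply_apply (U V : Fin 4 → ℝ) (α : Fin 4) :
    projApply U V α = V α + U α * minkInner U V := by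
  simp only [projApply, minkInner, proj, add_mul, Finset.sum_add_distrib, ite_mul, zero_mul,
    Finset.sum_ite_eq, Finset.mem_univ, if_true, ← mul_assoc, gmink_mul_self, one_mul]
  rw [Finset.mul_sum]; ring_nf

lemma projApply_self (U : Fin 4 → ℝ) (hU : minkInner U U = -1) : projApply U U = 0 := by
  funext α
  rw [projApply_apply, hU, Pi.zero_apply]
  ring

lemma projApply_of_minkInner_eq_zero (U V : Fin 4 → ℝ) (h : minkInner U V = 0) :
    projApply U V = V := by
  funext α
  rw [projApply_apply, h, mul_zero, add_zero]

lemma lowerContract_BB (U V : Fin 4 → ℝ) (θ η ζt σ χ : ℝ) (α γ : Fin 4) :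
    lowerContract (fun β δ => BB U θ η ζt σ χ α β γ δ) V =
      χ * θ ^ 2 * (lowerContract (proj U) V - minkInner U V ^ 2) * U α * U γ
      + θ * (η * lowerContract (proj U) V - σ * minkInner U V ^ 2) * proj U α γ
      + ((1/3) * η + ζt) * θ * projApply U V α * projApply U V γ := by
  simp only [lowerContract, BB, minkInner, projApply, Fin.sum_univ_four]
  simp only [proj_comm U 0 γ, proj_comm U 1 γ, proj_comm U 2 γ, proj_comm U 3 γ]
  ring

lemma lowerContract_BB4 (U V : Fin 4 → ℝ) (μ : ℝ) :
    lowerContract (BB4 U μ) V = μ * (lowerContract (proj U) V - minkInner U V ^ 2) := by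
  simp only [lowerContract, BB4, minkInner, Fin.sum_univ_four]
  ring

lemma lowerContract_zero (V : Fin 4 → ℝ) : lowerContract (fun _ _ => 0) V = 0 := by
  simp [lowerContract]

lemma lowerContract_BB_velocity (U : Fin 4 → ℝ) (hU : minkInner U U = -1) (θ η ζt σ χ : ℝ)
    (α γ : Fin 4) :
    lowerContract (fun β δ => BB U θ η ζt σ χ α β γ δ) U =
      -(χ * θ ^ 2) * U α * U γ + -(σ * θ) * proj U α γ := by
  rw [lowerContract_BB, lowerContract_proj, projApply_self U hU, hU]
  simp only [Pi.zero_apply]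
  ring

lemma lowerContract_BB_unit_normal (U V : Fin 4 → ℝ) (hUV : minkInner U V = 0)
    (hV : minkInner V V = 1) (θ η ζt σ χ : ℝ) (α γ : Fin 4) :
    lowerContract (fun β δ => BB U θ η ζt σ χ α β γ δ) V =
      χ * θ ^ 2 * U α * U γ + η * θ * proj U α γ + ((1/3) * η + ζt) * θ * V α * V γ := by
  rw [lowerContract_BB, lowerContract_proj, projApply_of_minkInner_eq_zero U V hUV, hUV, hV]
  ring

lemma lowerContract_BB4_velocity (U : Fin 4 → ℝ) (hU : minkInner U U = -1) (μ : ℝ) :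
    lowerContract (BB4 U μ) U = -μ := by
  rw [lowerContract_BB4, lowerContract_proj, hU]
  ring

lemma lowerContract_BB4_unit_normal (U V : Fin 4 → ℝ) (hUV : minkInner U V = 0)
    (hV : minkInner V V = 1) (μ : ℝ) : lowerContract (BB4 U μ) V = μ := by
  rw [lowerContract_BB4, lowerContract_proj, hUV, hV]
  ring

section B5Blocks

variable (U : Fin 4 → ℝ) (θ η ζt σ χ μ : ℝ)

lemma B5_castSucc_castSucc (α γ : Fin 4) (β δ : Fin 4) :
    B5 U θ η ζt σ χ μ α.castSucc β γ.castSucc δ = BB U θ η ζt σ χ α β γ δ := by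
  simp [B5]

lemma B5_castSucc_last (α : Fin 4) (β δ : Fin 4) :
    B5 U θ η ζt σ χ μ α.castSucc β (Fin.last 4) δ = 0 := by
  simp [B5]

lemma B5_last_castSucc (γ : Fin 4) (β δ : Fin 4) :
    B5 U θ η ζt σ χ μ (Fin.last 4) β γ.castSucc δ = 0 := by
  simp [B5]

lemma B5_last_last (β δ : Fin 4) :
    B5 U θ η ζt σ χ μ (Fin.last 4) β (Fin.last 4) δ = BB4 U μ β δ := by
  simp [B5]

end B5Blocks

noncomputable def restVelocity : Fin 4 → ℝ := fun β => if β = 0 then 1 else 0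

lemma minkInner_restVelocity_self : minkInner restVelocity restVelocity = -1 := by
  simp [minkInner, restVelocity, gmink]

lemma minkInner_restVelocity_cons_zero (n : Fin 3 → ℝ) :
    minkInner restVelocity (Fin.cons 0 n) = 0 := by
  simp [minkInner, restVelocity, gmink, Fin.sum_univ_four]

lemma minkInner_cons_zero_self (n : Fin 3 → ℝ) :
    minkInner (Fin.cons 0 n) (Fin.cons 0 n) = ∑ i, n i ^ 2 := by
  simp [minkInner, gmink, Fin.sum_univ_succ, sq]

lemma restVelocity_mul_add_proj (A S : ℝ) (α γ : Fin 4) :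
    A * restVelocity α * restVelocity γ + S * proj restVelocity α γ =
      if α = γ then (if α = 0 then A else S) else 0 := by
  fin_cases α <;> fin_cases γ <;> simp [proj, restVelocity, gmink]

theorem stmt18_general (θ η ζt σ χ μ : ℝ)
    (n : Fin 3 → ℝ) (hn : ∑ i, n i ^ 2 = 1) :
    (let U : Fin 4 → ℝ := fun β => if β = 0 then 1 else 0
     let N : Fin 4 → ℝ := Fin.cons 0 n
     -- `n` extended to an index running over all five fields (zero on fields 0 and 4)
     let n5 : Fin 5 → ℝ := Fin.cons 0 (Fin.snoc n 0)
     let targetU : Fin 5 → Fin 5 → ℝ := fun a c =>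
       if a = c then
         (if (a : ℕ) = 0 then -(χ * θ ^ 2) else if (a : ℕ) = 4 then -μ else -(σ * θ))
       else 0
     let targetN : Fin 5 → Fin 5 → ℝ := fun a c =>
       (if a = c then
          (if (a : ℕ) = 0 then χ * θ ^ 2 else if (a : ℕ) = 4 then μ else η * θ)
        else 0)
       + ((1/3) * η + ζt) * θ * n5 a * n5 c
     (∀ a c : Fin 5,
        (∑ β, ∑ δ, B5 U θ η ζt σ χ μ a β c δ * (gmink β * U β) * (gmink δ * U δ))
          = targetU a c) ∧
     (∀ a c : Fin 5,
        (∑ β, ∑ δ, B5 U θ η ζt σ χ μ a β c δ * (gmink β * N β) * (gmink δ * N δ))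
          = targetN a c)) := by
  intro U N n5 targetU targetN
  have hUU : minkInner restVelocity restVelocity = -1 := minkInner_restVelocity_self
  have hUN : minkInner restVelocity N = 0 := minkInner_restVelocity_cons_zero n
  have hNN : minkInner N N = 1 := (minkInner_cons_zero_self n).trans hn
  have hn5 : n5 = Fin.snoc N 0 := Fin.cons_snoc_eq_snoc_cons _ _ _
  have hU : U = restVelocity := rfl
  clear_value U N n5
  subst hU hn5
  refine ⟨fun a c => ?_, fun a c => ?_⟩
  · change lowerContract (fun β δ => B5 restVelocity θ η ζt σ χ μ a β c δ) restVelocity =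
      targetU a c
    induction a using Fin.lastCases <;> induction c using Fin.lastCases <;>
      simp only [B5_castSucc_castSucc, B5_castSucc_last, B5_last_castSucc, B5_last_last,
        lowerContract_zero, lowerContract_BB_velocity _ hUU, lowerContract_BB4_velocity _ hUU,
        restVelocity_mul_add_proj, targetU, Fin.castSucc_inj, Fin.castSucc_ne_last,
        (Fin.castSucc_ne_last _).symm, Fin.val_castSucc, Fin.val_last, if_true, if_false]
    all_goals simp [fun α : Fin 4 => α.isLt.ne]
  · change lowerContract (fun β δ => B5 restVelocity θ η ζt σ χ μ a β c δ) N = targetN a c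
    induction a using Fin.lastCases <;> induction c using Fin.lastCases <;>
      simp only [B5_castSucc_castSucc, B5_castSucc_last, B5_last_castSucc, B5_last_last,
        lowerContract_zero, lowerContract_BB_unit_normal _ _ hUN hNN,
        lowerContract_BB4_unit_normal _ _ hUN hNN,
        restVelocity_mul_add_proj, targetN, Fin.castSucc_inj, Fin.castSucc_ne_last,
        (Fin.castSucc_ne_last _).symm, Fin.val_castSucc, Fin.val_last, if_true, if_false,
        Fin.snoc_castSucc, Fin.snoc_last]
    all_goals simp [fun α : Fin 4 => α.isLt.ne]

/-- Rest-frame 5×5 matrices of contracted principal coefficients: with `U = e₀`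
and `N = (0, n)`, `|n| = 1`, the matrices `B^{aβcδ}U_βU_δ` and `B^{aβcδ}N_βN_δ`
are `diag(−χθ², −σθ I₃, −μ)` and `diag(χθ², ηθ I₃ + ((1/3)η + ζ̃)θ n nᵀ, μ)`. -/
theorem stmt18 (θ η ζt σ χ μ : ℝ) (hθ : 0 < θ)
    (n : Fin 3 → ℝ) (hn : ∑ i, n i ^ 2 = 1) :
    (let U : Fin 4 → ℝ := fun β => if β = 0 then 1 else 0
     let N : Fin 4 → ℝ := Fin.cons 0 n
     -- `n` extended to an index running over all five fields (zero on fields 0 and 4)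
     let n5 : Fin 5 → ℝ := Fin.cons 0 (Fin.snoc n 0)
     let targetU : Fin 5 → Fin 5 → ℝ := fun a c =>
       if a = c then
         (if (a : ℕ) = 0 then -(χ * θ ^ 2) else if (a : ℕ) = 4 then -μ else -(σ * θ))
       else 0
     let targetN : Fin 5 → Fin 5 → ℝ := fun a c =>
       (if a = c then
          (if (a : ℕ) = 0 then χ * θ ^ 2 else if (a : ℕ) = 4 then μ else η * θ)
        else 0)
       + ((1/3) * η + ζt) * θ * n5 a * n5 c
     (∀ a c : Fin 5,
        (∑ β, ∑ δ, B5 U θ η ζt σ χ μ a β c δ * (gmink β * U β) * (gmink δ * U δ))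
          = targetU a c) ∧
     (∀ a c : Fin 5,
        (∑ β, ∑ δ, B5 U θ η ζt σ χ μ a β c δ * (gmink β * N β) * (gmink δ * N δ))
          = targetN a c)) :=
  stmt18_general θ η ζt σ χ μ n hn
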